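/- arXiv:2510.00074 — 8 statements merged into one kernel-verified Lean document; each statement's English description precedes it below -/
import Mathlib

section
/- For every integer n ≥ 1, the generalized Fibonacci polynomial of Fibonacci type satisfies the explicit binomial formula 𝓕ₙ(x) = Σ_{i=0}^{⌊(n−1)/2⌋} C(n−i−1, i) · d(x)^{n−2i−1} · g(x)^{i} for all x ∈ ℝ. -/
/-!
Write the right-hand side as `∑_{k + i = n - 1} C(k, i) d^(k-i) g^i`, a sum over an antidiagonal.
Peeling one point off the antidiagonals and applying Pascal's rule `C(k+1, i+1) = C(k, i) + C(k, i+1)`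
shows that these sums satisfy the recurrence of `𝓕`, with the same initial values.
-/

/-- Generalized Fibonacci polynomials of Fibonacci type:
`𝓕₀ = 0`, `𝓕₁ = 1`, `𝓕ₙ = d·𝓕ₙ₋₁ + g·𝓕ₙ₋₂`. -/
noncomputable def GFPF (d g : ℝ → ℝ) : ℕ → ℝ → ℝ
  | 0 => fun _ => 0
  | 1 => fun _ => 1
  | n + 2 => fun x => d x * GFPF d g (n + 1) x + g x * GFPF d g n x

open Finset

section FibBinomSum

variable {R : Type*} [CommSemiring R]

def fibBinomSum (a b : R) (m : ℕ) : R :=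
  ∑ p ∈ antidiagonal m, (p.1.choose p.2 : R) * a ^ (p.1 - p.2) * b ^ p.2

-- The exponent `k - i` is truncated when `k ≤ i`, but then the coefficient vanishes.
lemma choose_succ_mul_pow_sub (a : R) (k i : ℕ) :
    (k.choose (i + 1) : R) * a ^ (k - i) = a * ((k.choose (i + 1) : R) * a ^ (k - (i + 1))) := by
  rcases lt_or_ge k (i + 1) with hk | hk
  · simp [Nat.choose_eq_zero_of_lt hk]
  · rw [show k - i = k - (i + 1) + 1 by omega, pow_succ]
    ring

lemma fibBinomSum_add_two (a b : R) (m : ℕ) :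
    fibBinomSum a b (m + 2) = a * fibBinomSum a b (m + 1) + b * fibBinomSum a b m := by
  have h2 : fibBinomSum a b (m + 2) = a ^ (m + 2) + ∑ p ∈ antidiagonal m,
      ((p.1 + 1).choose (p.2 + 1) : R) * a ^ (p.1 - p.2) * b ^ (p.2 + 1) := by
    rw [fibBinomSum, Nat.sum_antidiagonal_succ, Nat.sum_antidiagonal_succ']
    simp
  have h1 : fibBinomSum a b (m + 1) = a ^ (m + 1) + ∑ p ∈ antidiagonal m,
      (p.1.choose (p.2 + 1) : R) * a ^ (p.1 - (p.2 + 1)) * b ^ (p.2 + 1) := by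
    rw [fibBinomSum, Nat.sum_antidiagonal_succ']
    simp
  rw [h2, h1, fibBinomSum, mul_add, mul_sum, mul_sum, add_assoc, ← sum_add_distrib, ← pow_succ']
  congr 1
  refine sum_congr rfl fun p _ => ?_
  rw [Nat.choose_succ_succ, Nat.cast_add, add_mul, choose_succ_mul_pow_sub]
  ring

lemma eq_fibBinomSum_of_add_two (a b : R) {u : ℕ → R} (h0 : u 0 = 0) (h1 : u 1 = 1)
    (h : ∀ n, u (n + 2) = a * u (n + 1) + b * u n) (m : ℕ) :
    u (m + 1) = fibBinomSum a b m := by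
  induction m using Nat.twoStepInduction with
  | zero => simp [h1, fibBinomSum]
  | one => simp [h, h0, h1, fibBinomSum, Nat.sum_antidiagonal_succ]
  | more m ih ih' => rw [h, ih, ih', fibBinomSum_add_two]

lemma fibBinomSum_eq_sum_range (a b : R) (m : ℕ) :
    fibBinomSum a b m =
      ∑ i ∈ range (m / 2 + 1), ((m - i).choose i : R) * a ^ (m - 2 * i) * b ^ i := by
  rw [fibBinomSum, ← Nat.sum_antidiagonal_swap, Nat.sum_antidiagonal_eq_sum_range_succ_mk]
  refine (sum_subset (range_subset_range.2 (by omega)) fun i _ hi => ?_).symm.trans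
    (sum_congr rfl fun i _ => ?_)
  · simp [Nat.choose_eq_zero_of_lt (show m - i < i by simp at hi; omega)]
  · simp [show m - i - i = m - 2 * i by omega]

end FibBinomSum

theorem gfpf_binomial_formula (d g : ℝ → ℝ) (n : ℕ) (hn : 1 ≤ n) (x : ℝ) :
    GFPF d g n x =
      ∑ i ∈ Finset.range ((n - 1) / 2 + 1),
        (Nat.choose (n - i - 1) i : ℝ) * d x ^ (n - 2 * i - 1) * g x ^ i := by
  obtain ⟨m, rfl⟩ : ∃ m, n = m + 1 := ⟨n - 1, by omega⟩
  rw [eq_fibBinomSum_of_add_two (d x) (g x) (u := fun k => GFPF d g k x) rfl rfl (fun _ => rfl),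
    fibBinomSum_eq_sum_range]
  refine sum_congr rfl fun i _ => ?_
  rw [show m + 1 - i - 1 = m - i by omega, show m + 1 - 2 * i - 1 = m - 2 * i by omega]
end

section
/- If d : ℝ → ℝ is an odd function (d(−x) = −d(x) for all x) and g : ℝ → ℝ is an even function (g(−x) = g(x) for all x), then for every n ≥ 0 and every x ∈ ℝ, the generalized Fibonacci polynomial of Fibonacci type satisfies 𝓕ₙ(−x) = (−1)^{n+1} · 𝓕ₙ(x). -/
theorem gfpf_parity (d g : ℝ → ℝ)
    (hd : ∀ x, d (-x) = -d x) (hg : ∀ x, g (-x) = g x)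
    (n : ℕ) (x : ℝ) :
    GFPF d g n (-x) = (-1 : ℝ) ^ (n + 1) * GFPF d g n x := by
  induction n using Nat.twoStepInduction with
  | zero => simp [GFPF]
  | one => simp [GFPF]
  | more n ih₀ ih₁ =>
    simp only [GFPF, hd, hg, ih₀, ih₁]
    ring
end

section
/- Let n, m be positive integers with n ≢ m (mod 2). If d : ℝ → ℝ is an odd continuous function and g : ℝ → ℝ is an even continuous function, then for every a > 0, ∫_{−a}^{a} 𝓕ₙ(x) · 𝓕ₘ(x) dx = 0. -/
/-!
With `d` odd and `g` even, the recurrence makes `𝓕ₙ` even for odd `n` and odd for even `n`.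
Hence `𝓕ₙ 𝓕ₘ` is odd when `n ≢ m (mod 2)`, and an odd function integrates to zero over `[-a, a]`.
-/

theorem Function.Odd.intervalIntegral_neg_eq_zero {E : Type*} [NormedAddCommGroup E]
    [NormedSpace ℝ E] {f : ℝ → E} (hf : f.Odd) (a : ℝ) : ∫ x in -a..a, f x = 0 := by
  have h := intervalIntegral.integral_comp_neg (a := -a) (b := a) f
  simp only [neg_neg, hf.eq, intervalIntegral.integral_neg] at h
  rw [neg_eq_iff_add_eq_zero, ← two_smul ℝ, smul_eq_zero] at h
  exact h.resolve_left two_ne_zero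

theorem GFPF_neg {d g : ℝ → ℝ} (hd : d.Odd) (hg : g.Even) :
    ∀ n x, GFPF d g n (-x) = (-1) ^ (n + 1) * GFPF d g n x
  | 0, _ => by simp [GFPF]
  | 1, _ => by simp [GFPF]
  | n + 2, x => by
    simp only [GFPF, hd.eq, hg.eq, GFPF_neg hd hg n, GFPF_neg hd hg (n + 1)]
    ring

theorem gfpf_orthogonal_diff_parity_general (d g : ℝ → ℝ)
    (hd : ∀ x, d (-x) = -d x) (hg : ∀ x, g (-x) = g x)
    (n m : ℕ) (hnm : n % 2 ≠ m % 2)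
    (a : ℝ) :
    ∫ x in (-a)..a, GFPF d g n x * GFPF d g m x = 0 := by
  have hodd : Odd (n + 1 + (m + 1)) := Nat.odd_iff.mpr (by omega)
  refine Function.Odd.intervalIntegral_neg_eq_zero (fun x ↦ ?_) a
  rw [GFPF_neg hd hg, GFPF_neg hd hg, mul_mul_mul_comm, ← pow_add, hodd.neg_one_pow, neg_one_mul]

theorem gfpf_orthogonal_diff_parity (d g : ℝ → ℝ)
    (hdc : Continuous d) (hgc : Continuous g)
    (hd : ∀ x, d (-x) = -d x) (hg : ∀ x, g (-x) = g x)
    (n m : ℕ) (hn : 0 < n) (hm : 0 < m) (hnm : n % 2 ≠ m % 2)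
    (a : ℝ) (ha : 0 < a) :
    ∫ x in (-a)..a, GFPF d g n x * GFPF d g m x = 0 :=
  gfpf_orthogonal_diff_parity_general d g hd hg n m hnm a
end

section
/- Let k < 0 be a real number, let g be the constant function g(x) = k, and let d : ℝ → ℝ be a polynomial function. Suppose s₁ < s₂ are real numbers with d(s₁) = −√(−4k), d(s₂) = √(−4k), and d(x)² + 4k ≤ 0 for every x ∈ [s₁, s₂]. Then for all positive integers n ≠ m, ∫_{s₁}^{s₂} 𝓕ₙ(x) · 𝓕ₘ(x) · √(−4k − d(x)²) · d′(x) dx = 0. -/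
open Real intervalIntegral Polynomial.Chebyshev in
private lemma gfpf_comp (d : ℝ → ℝ) (k : ℝ) (n : ℕ) (x : ℝ) :
    GFPF d (fun _ => k) n x = GFPF id (fun _ => k) n (d x) := by
  induction n using Nat.twoStepInduction with
  | zero => rfl
  | one => rfl
  | more n ih1 ih2 => simp [GFPF, ih1, ih2]

private lemma gfpf_continuous (k : ℝ) (n : ℕ) :
    Continuous (GFPF id (fun _ => k) n) := by
  induction n using Nat.twoStepInduction with
  | zero => simpa [GFPF] using continuous_const
  | one => simpa [GFPF] using continuous_const
  | more n ih1 ih2 =>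
    show Continuous fun x => id x * GFPF id (fun _ => k) (n + 1) x + k * GFPF id (fun _ => k) n x
    exact (continuous_id.mul ih2).add (continuous_const.mul ih1)

private lemma gfpf_cheb (k : ℝ) (α : ℝ) (hα : α ≠ 0) (hα2 : α ^ 2 = -k) (n : ℕ) (u : ℝ) :
    GFPF id (fun _ => k) (n + 1) u
      = α ^ n * (Polynomial.Chebyshev.U ℝ (n : ℤ)).eval (u / (2 * α)) := by
  induction n using Nat.twoStepInduction with
  | zero => simp [GFPF, Polynomial.Chebyshev.U_zero]
  | one =>
    show id u * 1 + k * 0 = _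
    simp only [Nat.cast_one, Polynomial.Chebyshev.U_one]
    simp only [Polynomial.eval_mul, Polynomial.eval_ofNat, Polynomial.eval_X]
    simp only [id]
    field_simp
    ring
  | more n ih1 ih2 =>
    show id u * GFPF id (fun _ => k) (n + 2) u + k * GFPF id (fun _ => k) (n + 1) u = _
    rw [ih1, ih2]
    have : ((n : ℤ) + 2) = (n : ℤ) + 1 + 1 := by ring
    have hU : Polynomial.Chebyshev.U ℝ ((n : ℤ) + 2)
        = 2 * Polynomial.X * Polynomial.Chebyshev.U ℝ ((n : ℤ) + 1)
          - Polynomial.Chebyshev.U ℝ (n : ℤ) := Polynomial.Chebyshev.U_add_two ℝ (n : ℤ)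
    push_cast
    rw [hU]
    simp only [Polynomial.eval_sub, Polynomial.eval_mul, Polynomial.eval_ofNat,
      Polynomial.eval_X]
    have hk : k = -α ^ 2 := by linarith [hα2]
    rw [hk]
    simp only [id]
    field_simp
    ring

private lemma integral_cos_int_mul (j : ℤ) (hj : j ≠ 0) :
    ∫ θ in (0:ℝ)..Real.pi, Real.cos (j * θ) = 0 := by
  have hjr : (j : ℝ) ≠ 0 := Int.cast_ne_zero.mpr hj
  rw [intervalIntegral.integral_comp_mul_left (fun x => Real.cos x) hjr]
  simp [integral_cos, Real.sin_int_mul_pi]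

private lemma integral_sin_int_mul_sin (N M : ℤ) (hNM : N ≠ M) (hNM' : N + M ≠ 0) :
    ∫ θ in (0:ℝ)..Real.pi, Real.sin (N * θ) * Real.sin (M * θ) = 0 := by
  have h : ∀ θ : ℝ, Real.sin (N * θ) * Real.sin (M * θ)
      = (Real.cos (((N - M : ℤ) : ℝ) * θ) - Real.cos (((N + M : ℤ) : ℝ) * θ)) / 2 := by
    intro θ
    have e1 : ((N - M : ℤ) : ℝ) * θ = N * θ - M * θ := by push_cast; ring
    have e2 : ((N + M : ℤ) : ℝ) * θ = N * θ + M * θ := by push_cast; ring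
    rw [e1, e2, Real.cos_sub, Real.cos_add]
    ring
  simp only [h]
  have i1 : IntervalIntegrable (fun θ : ℝ => Real.cos (((N - M : ℤ) : ℝ) * θ))
      MeasureTheory.volume 0 Real.pi :=
    (Real.continuous_cos.comp (continuous_const.mul continuous_id)).intervalIntegrable _ _
  have i2 : IntervalIntegrable (fun θ : ℝ => Real.cos (((N + M : ℤ) : ℝ) * θ))
      MeasureTheory.volume 0 Real.pi :=
    (Real.continuous_cos.comp (continuous_const.mul continuous_id)).intervalIntegrable _ _
  rw [intervalIntegral.integral_div, intervalIntegral.integral_sub i1 i2,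
    integral_cos_int_mul (N - M) (sub_ne_zero.mpr hNM), integral_cos_int_mul (N + M) hNM']
  norm_num

theorem gfpf_chebyshev_orthogonality (k : ℝ) (hk : k < 0) (d : ℝ → ℝ)
    (hdpoly : ∃ P : Polynomial ℝ, ∀ x, d x = P.eval x)
    (s1 s2 : ℝ) (hs : s1 < s2)
    (hds1 : d s1 = -Real.sqrt (-(4 * k))) (hds2 : d s2 = Real.sqrt (-(4 * k)))
    (hle : ∀ x ∈ Set.Icc s1 s2, d x ^ 2 + 4 * k ≤ 0)
    (n m : ℕ) (hn : 0 < n) (hm : 0 < m) (hnm : n ≠ m) :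
    ∫ x in s1..s2,
        GFPF d (fun _ => k) n x * GFPF d (fun _ => k) m x *
          Real.sqrt (-(4 * k) - d x ^ 2) * deriv d x = 0 := by
  obtain ⟨P, hP⟩ := hdpoly
  have hd : d = fun x => P.eval x := funext hP
  subst hd
  set d : ℝ → ℝ := fun x => P.eval x with hd
  obtain ⟨n', rfl⟩ : ∃ n', n = n' + 1 := ⟨n - 1, (Nat.succ_pred_eq_of_pos hn).symm⟩
  obtain ⟨m', rfl⟩ : ∃ m', m = m' + 1 := ⟨m - 1, (Nat.succ_pred_eq_of_pos hm).symm⟩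
  set α := Real.sqrt (-k) with hαdef
  have hαpos : 0 < α := Real.sqrt_pos.mpr (by linarith)
  have hαne : α ≠ 0 := ne_of_gt hαpos
  have hα2 : α ^ 2 = -k := Real.sq_sqrt (by linarith)
  set c := Real.sqrt (-(4 * k)) with hcdef
  have hc2 : c ^ 2 = -(4 * k) := Real.sq_sqrt (by linarith)
  have hcα : c = 2 * α := by
    rw [hcdef, hαdef, show -(4 * k) = 4 * (-k) by ring,
      Real.sqrt_mul (by norm_num : (0:ℝ) ≤ 4), show (4:ℝ) = 2 ^ 2 by norm_num,
      Real.sqrt_sq (by norm_num : (0:ℝ) ≤ 2)]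
  have hcpos : 0 < c := by rw [hcα]; positivity
  -- the function of u
  set G : ℝ → ℝ := fun u =>
    GFPF id (fun _ => k) (n' + 1) u * GFPF id (fun _ => k) (m' + 1) u *
      Real.sqrt (-(4 * k) - u ^ 2) with hG
  have hGcont : Continuous G := by
    apply Continuous.mul
    · exact (gfpf_continuous k (n' + 1)).mul (gfpf_continuous k (m' + 1))
    · exact Real.continuous_sqrt.comp (continuous_const.sub (continuous_pow 2))
  -- first change of variables: u = d x
  have hderiv : ∀ x ∈ Set.uIcc s1 s2, HasDerivAt d (deriv d x) x := by
    intro x _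
    have h := P.hasDerivAt x
    rwa [← h.deriv] at h
  have hderivcont : ContinuousOn (deriv d) (Set.uIcc s1 s2) := by
    have : deriv d = fun x => P.derivative.eval x := funext fun x => (P.hasDerivAt x).deriv
    rw [this]
    exact (Polynomial.continuous _).continuousOn
  have step1 : (∫ x in s1..s2,
        GFPF d (fun _ => k) (n' + 1) x * GFPF d (fun _ => k) (m' + 1) x *
          Real.sqrt (-(4 * k) - d x ^ 2) * deriv d x)
      = ∫ u in (-c)..c, G u := by
    rw [← hds1, ← hds2, ← intervalIntegral.integral_comp_smul_deriv hderiv hderivcont hGcont]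
    apply intervalIntegral.integral_congr
    intro x _
    simp only [Function.comp_apply, smul_eq_mul, hG]
    rw [gfpf_comp d k (n' + 1) x, gfpf_comp d k (m' + 1) x]
    ring
  -- second change of variables: u = c cos θ
  have hderiv2 : ∀ θ ∈ Set.uIcc Real.pi 0,
      HasDerivAt (fun θ => c * Real.cos θ) (-(c * Real.sin θ)) θ := by
    intro θ _
    simpa [mul_comm, mul_neg] using (Real.hasDerivAt_cos θ).const_mul c
  have step2 : (∫ u in (-c)..c, G u)
      = ∫ θ in Real.pi..(0:ℝ), (-(c * Real.sin θ)) • (G ∘ fun θ => c * Real.cos θ) θ := by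
    rw [intervalIntegral.integral_comp_smul_deriv hderiv2
      (by fun_prop) hGcont]
    simp [Real.cos_pi]
  have step3 : (∫ θ in Real.pi..(0:ℝ), (-(c * Real.sin θ)) • (G ∘ fun θ => c * Real.cos θ) θ)
      = ∫ θ in (0:ℝ)..Real.pi, (c * Real.sin θ) * G (c * Real.cos θ) := by
    rw [intervalIntegral.integral_symm]
    rw [← intervalIntegral.integral_neg]
    apply intervalIntegral.integral_congr
    intro θ _
    simp [Function.comp]
  -- compute the integrand on [0, π]
  have step4 : (∫ θ in (0:ℝ)..Real.pi, (c * Real.sin θ) * G (c * Real.cos θ))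
      = ∫ θ in (0:ℝ)..Real.pi, (c ^ 2 * α ^ (n' + m')) *
          (Real.sin (((n' : ℤ) + 1) * θ) * Real.sin (((m' : ℤ) + 1) * θ)) := by
    apply intervalIntegral.integral_congr
    intro θ hθ
    rw [Set.uIcc_of_le Real.pi_pos.le] at hθ
    have hsin : 0 ≤ Real.sin θ := Real.sin_nonneg_of_nonneg_of_le_pi hθ.1 hθ.2
    have hsqrt : Real.sqrt (-(4 * k) - (c * Real.cos θ) ^ 2) = c * Real.sin θ := by
      have : -(4 * k) - (c * Real.cos θ) ^ 2 = (c * Real.sin θ) ^ 2 := by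
        linear_combination (-(c ^ 2)) * Real.sin_sq_add_cos_sq θ - hc2
      rw [this, Real.sqrt_sq (by positivity)]
    have harg : ∀ ψ : ℝ, c * Real.cos ψ / (2 * α) = Real.cos ψ := by
      intro ψ; rw [hcα]; field_simp
    have hn'' := Polynomial.Chebyshev.U_real_cos θ (n' : ℤ)
    have hm'' := Polynomial.Chebyshev.U_real_cos θ (m' : ℤ)
    simp only [hG]
    simp only [gfpf_cheb k α hαne hα2, harg]
    rw [hsqrt]
    push_cast at hn'' hm'' ⊢
    rw [← hn'', ← hm'']
    ring
  rw [step1, step2, step3, step4, intervalIntegral.integral_const_mul]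
  have h0 := integral_sin_int_mul_sin ((n' : ℤ) + 1) ((m' : ℤ) + 1)
    (by omega) (by positivity)
  push_cast at h0 ⊢
  rw [h0, mul_zero]
end

section
/- Let c, h, k, t be integers with c > 0, t > 0 odd, and k > h² (in particular k > 0). Let d(x) = c·x^t + h and let g be the constant function g(x) = −k/4. Set s₂ = ((√k − h)/c)^{1/t}, s₁ = ((√k + h)/c)^{1/t}, and ω(x) = √(k − d(x)²) · x^{t−1}. Then for all positive integers n, m: ∫_{−s₁}^{s₂} 𝓕ₙ(x) · 𝓕ₘ(x) · ω(x) dx = 0 if n ≠ m, and ∫_{−s₁}^{s₂} 𝓕ₙ(x) · 𝓕ₘ(x) · ω(x) dx > 0 if n = m. -/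
open Real Polynomial.Chebyshev MeasureTheory intervalIntegral


/-- The polynomial `d(x) = c·x^t + h`. -/
noncomputable def dFun (c h t : ℤ) : ℝ → ℝ := fun x => (c : ℝ) * x ^ t + (h : ℝ)

/-- The weight function `ω(x) = √(k − d(x)²)·x^{t−1}`. -/
noncomputable def wFun (c h k t : ℤ) : ℝ → ℝ :=
  fun x => Real.sqrt ((k : ℝ) - dFun c h t x ^ 2) * x ^ (t - 1)

lemma intcos (j : ℝ) (hj : j ≠ 0) : ∫ x in (0:ℝ)..π, Real.cos (j*x) = Real.sin (j*π)/j := by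
  rw [intervalIntegral.integral_comp_mul_left Real.cos hj]
  simp [integral_cos, div_eq_inv_mul]

lemma sin_orth (n m : ℕ) (hn : 0 < n) (hm : 0 < m) :
    ∫ x in (0:ℝ)..π, Real.sin (n*x) * Real.sin (m*x) = if n = m then π/2 else 0 := by
  have key : ∀ x : ℝ, Real.sin (n*x) * Real.sin (m*x)
      = (Real.cos (((n:ℝ)-m)*x) - Real.cos (((n:ℝ)+m)*x))/2 := by
    intro x
    rw [sub_mul, add_mul, Real.cos_sub, Real.cos_add]
    ring
  simp only [key]
  have hint : ∀ j : ℝ, IntervalIntegrable (fun x => Real.cos (j*x)) volume 0 π :=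
    fun j => (Real.continuous_cos.comp (continuous_const.mul continuous_id)).intervalIntegrable _ _
  rw [intervalIntegral.integral_div, intervalIntegral.integral_sub (hint _) (hint _)]
  by_cases hnm : n = m
  · subst hnm
    have h2 : ((n:ℝ) + n) ≠ 0 := by positivity
    simp only [sub_self, zero_mul, Real.cos_zero, intcos _ h2]
    have : ((n:ℝ) + n) * π = (2*n : ℕ) * π := by push_cast; ring
    rw [this, Real.sin_nat_mul_pi]
    simp
  · have h1 : ((n:ℝ) - m) ≠ 0 := by
      intro hh; apply hnm; exact_mod_cast sub_eq_zero.mp hh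
    have h2 : ((n:ℝ) + m) ≠ 0 := by positivity
    rw [intcos _ h1, intcos _ h2]
    have e1 : ((n:ℝ) - m) * π = (((n - m : ℤ)):ℝ) * π := by push_cast; ring
    have e2 : ((n:ℝ) + m) * π = (((n + m : ℤ)):ℝ) * π := by push_cast; ring
    rw [e1, e2, Real.sin_int_mul_pi, Real.sin_int_mul_pi]
    simp [hnm]

lemma gfpf_formula (s : ℝ) (hs : 0 < s) (d : ℝ → ℝ) (n : ℕ) (x : ℝ) :
    GFPF d (fun _ => -(s^2)/4) n x
      = (2/s) * (s/2)^n * (U ℝ ((n:ℤ)-1)).eval (d x / s) := by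
  induction n using Nat.twoStepInduction with
  | zero => simp [GFPF, U_neg_one]
  | one => simp [GFPF, U_zero]; field_simp
  | more n ih1 ih2 =>
    have hrec : U ℝ ((n:ℤ) + 2 - 1) = 2 * Polynomial.X * U ℝ ((n:ℤ) + 1 - 1) - U ℝ ((n:ℤ) - 1) := by
      have := U_add_two ℝ ((n:ℤ) - 1)
      have h1 : ((n:ℤ) - 1 + 2) = (n:ℤ) + 2 - 1 := by ring
      have h2 : ((n:ℤ) - 1 + 1) = (n:ℤ) + 1 - 1 := by ring
      rw [h1, h2] at this
      exact this
    show d x * GFPF d _ (n+1) x + (-(s^2)/4) * GFPF d _ n x = _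
    rw [ih1, ih2]
    push_cast
    rw [hrec]
    simp only [Polynomial.eval_sub, Polynomial.eval_mul, Polynomial.eval_X,
      Polynomial.eval_ofNat]
    field_simp
    ring


set_option maxHeartbeats 1000000 in
theorem gfpf_orthogonal_family (c h k t : ℤ)
    (hc : 0 < c) (ht : 0 < t) (htodd : Odd t) (hk : h ^ 2 < k)
    (s1 s2 : ℝ)
    (hs1 : s1 = ((Real.sqrt (k : ℝ) + (h : ℝ)) / (c : ℝ)) ^ ((t : ℝ)⁻¹))
    (hs2 : s2 = ((Real.sqrt (k : ℝ) - (h : ℝ)) / (c : ℝ)) ^ ((t : ℝ)⁻¹))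
    (n m : ℕ) (hn : 0 < n) (hm : 0 < m) :
    (n ≠ m →
      ∫ x in (-s1)..s2,
          GFPF (dFun c h t) (fun _ => -(k : ℝ) / 4) n x *
            GFPF (dFun c h t) (fun _ => -(k : ℝ) / 4) m x * wFun c h k t x = 0) ∧
    (n = m →
      0 < ∫ x in (-s1)..s2,
          GFPF (dFun c h t) (fun _ => -(k : ℝ) / 4) n x *
            GFPF (dFun c h t) (fun _ => -(k : ℝ) / 4) m x * wFun c h k t x) := by
  -- basic setup
  set T : ℕ := t.toNat with hT
  have htT : (t : ℤ) = (T : ℤ) := (Int.toNat_of_nonneg ht.le).symm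
  have hT0 : 0 < T := by omega
  have hToddN : Odd T := by
    rcases htodd with ⟨j, hj⟩
    exact ⟨j.toNat, by omega⟩
  have hcR : (0:ℝ) < c := by exact_mod_cast hc
  have hk0 : (0:ℝ) < k := by
    have : (0:ℤ) < k := lt_of_le_of_lt (sq_nonneg h) hk
    exact_mod_cast this
  set s : ℝ := Real.sqrt k with hsdef
  have hs0 : 0 < s := Real.sqrt_pos.mpr hk0
  have hs2k : s ^ 2 = (k:ℝ) := Real.sq_sqrt hk0.le
  have habs : |(h:ℝ)| < s := by
    rw [← Real.sqrt_sq_eq_abs]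
    exact Real.sqrt_lt_sqrt (sq_nonneg _) (by exact_mod_cast hk)
  obtain ⟨hh1, hh2⟩ := abs_lt.mp habs
  -- endpoints
  have hcast : ((t:ℤ):ℝ) = (T:ℝ) := by rw [htT]; push_cast; ring
  have hs2pow : s2 ^ T = (s - h) / c := by
    rw [hs2, hcast]
    exact Real.rpow_inv_natCast_pow (div_nonneg (by linarith) hcR.le) hT0.ne'
  have hs1pow : s1 ^ T = (s + h) / c := by
    rw [hs1, hcast]
    exact Real.rpow_inv_natCast_pow (div_nonneg (by linarith) hcR.le) hT0.ne'
  -- rewrite dFun / wFun with natural powers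
  have hD : ∀ x : ℝ, dFun c h t x = (c:ℝ) * x ^ T + h := by
    intro x; rw [dFun, htT, zpow_natCast]
  have hW : ∀ x : ℝ, wFun c h k t x
      = Real.sqrt ((k:ℝ) - ((c:ℝ) * x ^ T + h) ^ 2) * x ^ (T - 1) := by
    intro x
    rw [wFun, hD]
    congr 1
    rw [show t - 1 = ((T - 1 : ℕ) : ℤ) by omega, zpow_natCast]
  -- Chebyshev-type factor
  set A : ℕ → ℝ → ℝ := fun j u => (2/s) * (s/2)^j * (U ℝ ((j:ℤ)-1)).eval (u / s) with hA
  have hAcont : ∀ j, Continuous (A j) := by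
    intro j
    exact continuous_const.mul ((U ℝ ((j:ℤ)-1)).continuous_aeval.comp
      (continuous_id.div_const s))
  set G : ℝ → ℝ := fun u => A n u * A m u * Real.sqrt ((k:ℝ) - u ^ 2) with hG
  have hGcont : Continuous G := by
    apply ((hAcont n).mul (hAcont m)).mul
    exact Real.continuous_sqrt.comp (continuous_const.sub (continuous_pow 2))
  -- GFPF in terms of A
  have hF : ∀ j x, GFPF (dFun c h t) (fun _ => -(k : ℝ) / 4) j x = A j (dFun c h t x) := by
    intro j x
    have : (fun _ : ℝ => -(k:ℝ)/4) = (fun _ : ℝ => -(s^2)/4) := by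
      funext y; rw [hs2k]
    rw [this, gfpf_formula s hs0]
  -- step 1 : reduce to the substituted integral
  have key1 : (∫ x in (-s1)..s2,
        GFPF (dFun c h t) (fun _ => -(k : ℝ) / 4) n x *
          GFPF (dFun c h t) (fun _ => -(k : ℝ) / 4) m x * wFun c h k t x)
      = ((c:ℝ) * T)⁻¹ * ∫ x in (-s1)..s2,
          (((c:ℝ) * T * x ^ (T-1)) • G (dFun c h t x)) := by
    rw [← intervalIntegral.integral_const_mul]
    apply intervalIntegral.integral_congr
    intro x _
    have hcT : ((c:ℝ) * T) ≠ 0 := by positivity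
    dsimp only
    rw [hF, hF, hW]
    simp only [smul_eq_mul, hG]
    rw [hD]
    field_simp
  -- step 2 : substitution u = dFun x
  have hderiv : ∀ x ∈ Set.uIcc (-s1) s2, HasDerivAt (dFun c h t)
      ((c:ℝ) * T * x ^ (T-1)) x := by
    intro x _
    have : HasDerivAt (fun x : ℝ => (c:ℝ) * x ^ T + h)
        ((c:ℝ) * ((T:ℝ) * x ^ (T-1))) x :=
      (((hasDerivAt_pow T x).const_mul (c:ℝ)).add_const _)
    have h2 : (fun x : ℝ => (c:ℝ) * x ^ T + h) = dFun c h t := by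
      funext y; rw [hD]
    rw [h2] at this
    convert this using 1
    ring
  have key2 : (∫ x in (-s1)..s2, (((c:ℝ) * T * x ^ (T-1)) • G (dFun c h t x)))
      = ∫ u in (dFun c h t (-s1))..(dFun c h t s2), G u := by
    exact intervalIntegral.integral_comp_smul_deriv hderiv
      (by fun_prop) hGcont
  have hends1 : dFun c h t (-s1) = -s := by
    rw [hD, hToddN.neg_pow, hs1pow]
    field_simp
    ring
  have hends2 : dFun c h t s2 = s := by
    rw [hD, hs2pow]
    field_simp
    ring
  -- step 3 : substitution u = s cos θ
  have hcosderiv : ∀ θ ∈ Set.uIcc (0:ℝ) π, HasDerivAt (fun θ : ℝ => s * Real.cos θ)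
      (-(s * Real.sin θ)) θ := by
    intro θ _
    simpa [mul_comm] using (Real.hasDerivAt_cos θ).const_mul s
  have key3 : (∫ u in (-s)..s, G u)
      = ∫ θ in (0:ℝ)..π, (s * Real.sin θ) * G (s * Real.cos θ) := by
    have := intervalIntegral.integral_comp_smul_deriv hcosderiv (by fun_prop) hGcont
    simp only [smul_eq_mul] at this
    rw [show s * Real.cos 0 = s by simp, show s * Real.cos π = -s by simp] at this
    rw [intervalIntegral.integral_symm s (-s), ← this, ← intervalIntegral.integral_neg]
    congr 1
    funext θ
    simp only [Function.comp]
    ring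
  -- step 4 : integrand is C * sin nθ * sin mθ on [0, π]
  set C : ℝ := 4 * (s/2)^(n+m) with hC
  have hC0 : 0 < C := by positivity
  have key4 : (∫ θ in (0:ℝ)..π, (s * Real.sin θ) * G (s * Real.cos θ))
      = ∫ θ in (0:ℝ)..π, C * (Real.sin (n*θ) * Real.sin (m*θ)) := by
    apply intervalIntegral.integral_congr
    intro θ hθ
    rw [Set.uIcc_of_le Real.pi_nonneg] at hθ
    have hsin : 0 ≤ Real.sin θ := Real.sin_nonneg_of_mem_Icc hθ
    have hsqrt : Real.sqrt ((k:ℝ) - (s * Real.cos θ)^2) = s * Real.sin θ := by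
      have : (k:ℝ) - (s * Real.cos θ)^2 = (s * Real.sin θ)^2 := by
        rw [← hs2k]
        have := Real.sin_sq_add_cos_sq θ
        nlinarith
      rw [this, Real.sqrt_sq (by positivity)]
    have hUn : (U ℝ ((n:ℤ)-1)).eval (Real.cos θ) * Real.sin θ = Real.sin (n*θ) := by
      rw [U_real_cos (θ := θ) (n := (n:ℤ)-1)]
      norm_num
    have hUm : (U ℝ ((m:ℤ)-1)).eval (Real.cos θ) * Real.sin θ = Real.sin (m*θ) := by
      rw [U_real_cos (θ := θ) (n := (m:ℤ)-1)]
      norm_num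
    have hss : s * Real.cos θ / s = Real.cos θ := by field_simp
    have hprod : Real.sin (n*θ) * Real.sin (m*θ)
        = (U ℝ ((n:ℤ)-1)).eval (Real.cos θ) * (U ℝ ((m:ℤ)-1)).eval (Real.cos θ)
          * Real.sin θ ^ 2 := by
      rw [← hUn, ← hUm]; ring
    simp only [hG, hA, hsqrt, hss]
    rw [hC, hprod]
    field_simp
    ring
  -- step 5 : conclude
  have key5 : (∫ θ in (0:ℝ)..π, C * (Real.sin (n*θ) * Real.sin (m*θ)))
      = C * (if n = m then π/2 else 0) := by
    rw [intervalIntegral.integral_const_mul, sin_orth n m hn hm]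
  have total : (∫ x in (-s1)..s2,
        GFPF (dFun c h t) (fun _ => -(k : ℝ) / 4) n x *
          GFPF (dFun c h t) (fun _ => -(k : ℝ) / 4) m x * wFun c h k t x)
      = ((c:ℝ) * T)⁻¹ * (C * (if n = m then π/2 else 0)) := by
    rw [key1, key2, hends1, hends2, key3, key4, key5]
  constructor
  · intro hnm
    rw [total, if_neg hnm]
    ring
  · intro hnm
    rw [total, if_pos hnm]
    have : (0:ℝ) < ((c:ℝ) * T)⁻¹ := by positivity
    positivity
end

section
/- Let c, h, k, t be integers with c ≠ 0, k > 0, t > 0. Let d(x) = c·x^t + h and let g be the constant function g(x) = k/4. Let n, m be positive integers with n ≡ m (mod 2), let a > 0, and let w : ℝ → ℝ be a continuous function with w(x) > 0 for all x ∈ [−a, a]. Then ∫_{−a}^{a} 𝓕ₙ(x) · 𝓕ₘ(x) · w(x) dx > 0; in particular this integral is nonzero. -/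
section GFPF

variable {d g : ℝ → ℝ} {x : ℝ}

theorem continuous_gfpf (hd : Continuous d) (hg : Continuous g) : ∀ n, Continuous (GFPF d g n)
  | 0 => continuous_const
  | 1 => continuous_const
  | n + 2 => by
    have := continuous_gfpf hd hg n
    have := continuous_gfpf hd hg (n + 1)
    simp only [GFPF]
    fun_prop

theorem gfpf_nonneg (hd : 0 ≤ d x) (hg : 0 ≤ g x) : ∀ n, 0 ≤ GFPF d g n x
  | 0 => le_rfl
  | 1 => zero_le_one
  | n + 2 => by
    have := gfpf_nonneg hd hg n
    have := gfpf_nonneg hd hg (n + 1)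
    simp only [GFPF]
    positivity

theorem gfpf_pos (hd : 0 < d x) (hg : 0 ≤ g x) : ∀ {n}, 0 < n → 0 < GFPF d g n x
  | 1, _ => zero_lt_one
  | n + 2, _ =>
    add_pos_of_pos_of_nonneg (mul_pos hd (gfpf_pos hd hg n.succ_pos))
      (mul_nonneg hg (gfpf_nonneg hd.le hg n))

theorem gfpf_neg_left : ∀ n, GFPF (-d) g n x = (-1) ^ (n + 1) * GFPF d g n x
  | 0 => by simp [GFPF]
  | 1 => by simp [GFPF]
  | n + 2 => by
    simp only [GFPF, Pi.neg_apply, gfpf_neg_left n, gfpf_neg_left (n + 1)]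
    ring

theorem gfpf_neg_left_mul_gfpf_neg_left {n m : ℕ} (hnm : n % 2 = m % 2) :
    GFPF (-d) g n x * GFPF (-d) g m x = GFPF d g n x * GFPF d g m x := by
  have hsign : (-1 : ℝ) ^ (n + 1) * (-1) ^ (m + 1) = 1 := by
    rw [← pow_add, Even.neg_one_pow (by rw [Nat.even_iff]; omega)]
  rw [gfpf_neg_left, gfpf_neg_left, mul_mul_mul_comm, hsign, one_mul]

theorem gfpf_mul_nonneg (hg : 0 ≤ g x) {n m : ℕ} (hnm : n % 2 = m % 2) :
    0 ≤ GFPF d g n x * GFPF d g m x := by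
  rcases le_total 0 (d x) with hd | hd
  · exact mul_nonneg (gfpf_nonneg hd hg n) (gfpf_nonneg hd hg m)
  · have hd' : 0 ≤ (-d) x := by simpa using hd
    rw [← gfpf_neg_left_mul_gfpf_neg_left hnm]
    exact mul_nonneg (gfpf_nonneg hd' hg n) (gfpf_nonneg hd' hg m)

theorem gfpf_mul_pos (hg : 0 ≤ g x) (hd : d x ≠ 0) {n m : ℕ} (hn : 0 < n) (hm : 0 < m)
    (hnm : n % 2 = m % 2) : 0 < GFPF d g n x * GFPF d g m x := by
  rcases hd.lt_or_gt with hd | hd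
  · have hd' : 0 < (-d) x := by simpa using hd
    rw [← gfpf_neg_left_mul_gfpf_neg_left hnm]
    exact mul_pos (gfpf_pos hd' hg hn) (gfpf_pos hd' hg hm)
  · exact mul_pos (gfpf_pos hd hg hn) (gfpf_pos hd hg hm)

end GFPF

section dFun

variable {c h t : ℤ}

theorem continuous_dFun (ht : 0 ≤ t) : Continuous (dFun c h t) :=
  (continuous_const.mul (continuous_id.zpow₀ t fun _ => Or.inr ht)).add continuous_const

theorem dFun_injOn_Ici (hc : c ≠ 0) (ht : 0 < t) : Set.InjOn (dFun c h t) (Set.Ici 0) := by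
  intro x hx y hy hxy
  have hpow : x ^ t = y ^ t := by
    simpa [dFun, Int.cast_ne_zero.mpr hc] using hxy
  exact (zpow_left_strictMonoOn₀ ht).injOn hx hy hpow

theorem exists_mem_Icc_dFun_ne_zero (hc : c ≠ 0) (ht : 0 < t) {u v : ℝ} (hu : 0 ≤ u)
    (huv : u < v) : ∃ x ∈ Set.Icc u v, dFun c h t x ≠ 0 := by
  by_contra! hzero
  have := dFun_injOn_Ici hc ht (Set.mem_Ici.mpr hu) (Set.mem_Ici.mpr (hu.trans huv.le))
    ((hzero u (Set.left_mem_Icc.mpr huv.le)).trans (hzero v (Set.right_mem_Icc.mpr huv.le)).symm)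
  exact huv.ne this

end dFun

theorem gfpf_not_orthogonal_same_parity (c h k t : ℤ)
    (hc : c ≠ 0) (hk : 0 < k) (ht : 0 < t)
    (n m : ℕ) (hn : 0 < n) (hm : 0 < m) (hnm : n % 2 = m % 2)
    (a : ℝ) (ha : 0 < a)
    (w : ℝ → ℝ) (hw : Continuous w) (hwpos : ∀ x ∈ Set.Icc (-a) a, 0 < w x) :
    (0 < ∫ x in (-a)..a,
        GFPF (dFun c h t) (fun _ => (k : ℝ) / 4) n x *
          GFPF (dFun c h t) (fun _ => (k : ℝ) / 4) m x * w x) ∧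
    (∫ x in (-a)..a,
        GFPF (dFun c h t) (fun _ => (k : ℝ) / 4) n x *
          GFPF (dFun c h t) (fun _ => (k : ℝ) / 4) m x * w x) ≠ 0 := by
  set g : ℝ → ℝ := fun _ => (k : ℝ) / 4
  have hg (x : ℝ) : 0 ≤ g x := by positivity
  have hF := continuous_gfpf (continuous_dFun (c := c) (h := h) ht.le) (g := g) continuous_const
  have hcont := ((hF n).mul (hF m)).mul hw
  obtain ⟨x₀, hx₀, hdx₀⟩ := exists_mem_Icc_dFun_ne_zero (h := h) hc ht le_rfl ha
  have hx₀' : x₀ ∈ Set.Icc (-a) a := Set.Icc_subset_Icc (by linarith) le_rfl hx₀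
  have hpos := intervalIntegral.integral_pos (by linarith) hcont.continuousOn
    (fun x hx => mul_nonneg (gfpf_mul_nonneg (hg x) hnm) (hwpos x (Set.Ioc_subset_Icc_self hx)).le)
    ⟨x₀, hx₀', mul_pos (gfpf_mul_pos (hg x₀) hdx₀ hn hm hnm) (hwpos x₀ hx₀')⟩
  exact ⟨hpos, hpos.ne'⟩
end

section
/- Let γ > 0 be a real number, let g be the constant function g(x) = γ, and let d : ℝ → ℝ be any function. Then for every odd integer n ≥ 1 and every x ∈ ℝ, the generalized Fibonacci polynomial of Fibonacci type satisfies 𝓕ₙ(x) ≥ γ^{(n−1)/2} > 0; in particular 𝓕ₙ has no real roots when n is odd. -/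
section

variable {d g : ℝ → ℝ} {x : ℝ}

@[simp] lemma GFPF_zero : GFPF d g 0 x = 0 := rfl

@[simp] lemma GFPF_one : GFPF d g 1 x = 1 := rfl

lemma GFPF_add_two (n : ℕ) :
    GFPF d g (n + 2) x = d x * GFPF d g (n + 1) x + g x * GFPF d g n x := rfl

lemma pow_le_GFPF_odd_and_mul_GFPF_even_nonneg (hg : 0 ≤ g x) (k : ℕ) :
    g x ^ k ≤ GFPF d g (2 * k + 1) x ∧ 0 ≤ d x * GFPF d g (2 * k) x := by
  induction k with
  | zero => simp
  | succ k ih =>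
    obtain ⟨hodd, heven⟩ := ih
    have hodd_nonneg : 0 ≤ GFPF d g (2 * k + 1) x := (pow_nonneg hg k).trans hodd
    have heven_succ : 0 ≤ d x * GFPF d g (2 * k + 2) x := by
      have hexpand : d x * GFPF d g (2 * k + 2) x =
          d x ^ 2 * GFPF d g (2 * k + 1) x + g x * (d x * GFPF d g (2 * k) x) := by
        rw [GFPF_add_two]; ring
      rw [hexpand]
      exact add_nonneg (mul_nonneg (sq_nonneg _) hodd_nonneg) (mul_nonneg hg heven)
    refine ⟨?_, heven_succ⟩
    calc g x ^ (k + 1) = g x * g x ^ k := pow_succ' _ _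
      _ ≤ g x * GFPF d g (2 * k + 1) x := mul_le_mul_of_nonneg_left hodd hg
      _ ≤ d x * GFPF d g (2 * k + 2) x + g x * GFPF d g (2 * k + 1) x :=
        le_add_of_nonneg_left heven_succ
      _ = GFPF d g (2 * (k + 1) + 1) x := (GFPF_add_two (2 * k + 1)).symm

lemma pow_le_GFPF_odd (hg : 0 ≤ g x) (k : ℕ) : g x ^ k ≤ GFPF d g (2 * k + 1) x :=
  (pow_le_GFPF_odd_and_mul_GFPF_even_nonneg hg k).1

end

theorem gfpf_odd_no_real_roots_general (γ : ℝ) (hγ : 0 < γ) (d : ℝ → ℝ)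
    (n : ℕ) (hnodd : Odd n) (x : ℝ) :
    γ ^ ((n - 1) / 2) ≤ GFPF d (fun _ => γ) n x ∧
    0 < γ ^ ((n - 1) / 2) ∧
    GFPF d (fun _ => γ) n x ≠ 0 := by
  obtain ⟨k, rfl⟩ := hnodd
  rw [show (2 * k + 1 - 1) / 2 = k by omega]
  have hbound : γ ^ k ≤ GFPF d (fun _ => γ) (2 * k + 1) x :=
    pow_le_GFPF_odd (g := fun _ => γ) hγ.le k
  have hpos : 0 < γ ^ k := pow_pos hγ k
  exact ⟨hbound, hpos, (hpos.trans_le hbound).ne'⟩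

theorem gfpf_odd_no_real_roots (γ : ℝ) (hγ : 0 < γ) (d : ℝ → ℝ)
    (n : ℕ) (hn1 : 1 ≤ n) (hnodd : Odd n) (x : ℝ) :
    γ ^ ((n - 1) / 2) ≤ GFPF d (fun _ => γ) n x ∧
    0 < γ ^ ((n - 1) / 2) ∧
    GFPF d (fun _ => γ) n x ≠ 0 :=
  gfpf_odd_no_real_roots_general γ hγ d n hnodd x
end

section
/- Let d(x) = a·x + b with a, b ∈ ℝ, let γ > 0 be a real number, and let g be the constant function g(x) = γ. Then there is no Borel measure μ on ℝ with μ ≠ 0 that makes the sequence (𝓕ₙ) orthogonal: indeed, for all odd positive integers n, m and every nonzero Borel measure μ on ℝ such that the function x ↦ 𝓕ₙ(x)·𝓕ₘ(x) is μ-integrable, one has ∫_ℝ 𝓕ₙ(x)·𝓕ₘ(x) dμ(x) > 0. In particular there is no nonzero Borel measure μ such that 𝓕ₙ·𝓕ₘ is μ-integrable with ∫_ℝ 𝓕ₙ·𝓕ₘ dμ = 0 for all n ≠ m. -/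
open MeasureTheory

/-!
For odd `n` the polynomial `𝓕ₙ` is positive everywhere as soon as `g` is positive: expanding the
recurrence twice gives `𝓕ₙ₊₂ = d² 𝓕ₙ + g (d 𝓕ₙ₋₁) + g 𝓕ₙ` and `d 𝓕ₙ₊₁ = d² 𝓕ₙ + g (d 𝓕ₙ₋₁)`,
so positivity of the odd terms and nonnegativity of `d` times the even terms propagate together.
Hence `𝓕ₙ 𝓕ₘ > 0` for odd `n, m`, its integral against any nonzero measure is positive, and in
particular `𝓕₁` and `𝓕₃` are never orthogonal.
-/

theorem integral_pos_of_forall_pos {α : Type*} [MeasurableSpace α] {μ : Measure α}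
    {f : α → ℝ} (hf : ∀ x, 0 < f x) (hfi : Integrable f μ) (hμ : μ ≠ 0) :
    0 < ∫ x, f x ∂μ := by
  have hsupp : Function.support f = Set.univ :=
    Set.eq_univ_of_forall fun x => (hf x).ne'
  rw [integral_pos_iff_support_of_nonneg (fun x => (hf x).le) hfi, hsupp]
  exact Measure.measure_univ_pos.mpr hμ

namespace GFPF

variable {d g : ℝ → ℝ} {x : ℝ}

theorem add_two (d g : ℝ → ℝ) (n : ℕ) (x : ℝ) :
    GFPF d g (n + 2) x = d x * GFPF d g (n + 1) x + g x * GFPF d g n x :=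
  rfl

theorem odd_pos_and_mul_even_nonneg (hg : 0 < g x) (k : ℕ) :
    0 < GFPF d g (2 * k + 1) x ∧ 0 ≤ d x * GFPF d g (2 * k) x := by
  induction k with
  | zero => simp [GFPF]
  | succ k ih =>
    obtain ⟨hodd, heven⟩ := ih
    have hmul_even : d x * GFPF d g (2 * k + 2) x =
        d x ^ 2 * GFPF d g (2 * k + 1) x + g x * (d x * GFPF d g (2 * k) x) := by
      rw [add_two]; ring
    have hmul_even_nonneg : 0 ≤ d x * GFPF d g (2 * k + 2) x := by
      rw [hmul_even]; positivity
    refine ⟨?_, hmul_even_nonneg⟩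
    rw [show 2 * (k + 1) + 1 = 2 * k + 1 + 2 by ring, add_two]
    have hg_odd := mul_pos hg hodd
    linarith

theorem pos_of_odd (hg : 0 < g x) {n : ℕ} (hn : Odd n) : 0 < GFPF d g n x := by
  obtain ⟨k, rfl⟩ := hn
  exact (odd_pos_and_mul_even_nonneg hg k).1

theorem integral_mul_pos_of_odd (hg : ∀ x, 0 < g x) {n m : ℕ} (hn : Odd n) (hm : Odd m)
    {μ : Measure ℝ} (hμ : μ ≠ 0) (hint : Integrable (fun x => GFPF d g n x * GFPF d g m x) μ) :
    0 < ∫ x, GFPF d g n x * GFPF d g m x ∂μ :=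
  integral_pos_of_forall_pos (fun x => mul_pos (pos_of_odd (hg x) hn) (pos_of_odd (hg x) hm))
    hint hμ

end GFPF

theorem gfpf_not_orthogonal_linear_positive (a b γ : ℝ) (hγ : 0 < γ) :
    (∀ n m : ℕ, 0 < n → 0 < m → Odd n → Odd m →
      ∀ μ : Measure ℝ, μ ≠ 0 →
        Integrable
          (fun x => GFPF (fun x => a * x + b) (fun _ => γ) n x *
            GFPF (fun x => a * x + b) (fun _ => γ) m x) μ →
        0 < ∫ x, GFPF (fun x => a * x + b) (fun _ => γ) n x *
              GFPF (fun x => a * x + b) (fun _ => γ) m x ∂μ) ∧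
    ¬ ∃ μ : Measure ℝ, μ ≠ 0 ∧
        ∀ n m : ℕ, 0 < n → 0 < m → n ≠ m →
          Integrable
            (fun x => GFPF (fun x => a * x + b) (fun _ => γ) n x *
              GFPF (fun x => a * x + b) (fun _ => γ) m x) μ ∧
          ∫ x, GFPF (fun x => a * x + b) (fun _ => γ) n x *
              GFPF (fun x => a * x + b) (fun _ => γ) m x ∂μ = 0 := by
  have hg : ∀ x : ℝ, 0 < (fun _ => γ) x := fun _ => hγ
  refine ⟨fun n m _ _ hn hm μ hμ hint => GFPF.integral_mul_pos_of_odd hg hn hm hμ hint, ?_⟩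
  rintro ⟨μ, hμ, horth⟩
  obtain ⟨hint, hzero⟩ := horth 1 3 one_pos three_pos (by norm_num)
  exact (GFPF.integral_mul_pos_of_odd hg odd_one (by decide) hμ hint).ne' hzero
end
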